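/- arXiv:1604.05229 — 2 statements merged into one kernel-verified Lean document; each statement's English description precedes it below -/
import Mathlib

section
/- Let $M_0 \in (0,1/4)$, $\rho_0 > 0$, $u_0' \in \mathbb{R}$, and set $\lambda_i$ as the roots of $\lambda^2 + \lambda + M_0$, $\sqrt{\Xi} = \sqrt{1-4M_0}$, $A = (\lambda_1 u_0' - M_0 + 2\rho_0)/\sqrt{\Xi}$ and $B = (M_0 - 2\rho_0 - \lambda_2 u_0')/\sqrt{\Xi}$. Define $g(t) = 2\rho_0/M_0 + (A/\lambda_1)e^{\lambda_1 t} + (B/\lambda_2)e^{\lambda_2 t}$, so $g(0) = 1$. Then $\inf_{t \geq 0} g(t) \leq 0$ if and only if $u_0' < 0$, $M_0 - 2\rho_0 < \lambda_1 u_0'$, and $2\rho_0 \leq (\lambda_1 u_0' - M_0 + 2\rho_0)^{-\lambda_2/\sqrt{\Xi}}(\lambda_2 u_0' - M_0 + 2\rho_0)^{\lambda_1/\sqrt{\Xi}}$. -/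
/-!
With `λ₂ < λ₁ < 0`, the derivative of `g` is `A e^{λ₁ t} + B e^{λ₂ t}`. If `A ≤ 0` or `B ≥ 0`,
`g` never drops below `min (2ρ₀/M₀) (g 0)`. Otherwise `B/λ₂ > 0`, and since `e^{λ₂ t}` is the power
`(e^{λ₁ t})^{λ₂/λ₁}` with exponent `≥ 1`, Bernoulli's inequality makes `g` a convex function of
`e^{λ₁ t}`: it lies above its tangent lines, so the critical point `t₀ = log (-B/A) / √Ξ` is a global
minimum. It lies in `[0, ∞)` iff `u₀' = A + B ≤ 0` (otherwise `g ≥ g 0 = 1` there), and the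
threshold inequality is exactly `g t₀ ≤ 0`.
-/

open Real

noncomputable def deformation (C A B l1 l2 t : ℝ) : ℝ :=
  C + A / l1 * exp (l1 * t) + B / l2 * exp (l2 * t)

theorem one_add_div_mul_exp_sub_one_le_exp {l1 l2 : ℝ} (hl1 : l1 ≠ 0) (hl : 1 ≤ l2 / l1)
    (t : ℝ) : 1 + l2 / l1 * (exp (l1 * t) - 1) ≤ exp (l2 * t) := by
  have h := one_add_mul_self_le_rpow_one_add (by linarith [exp_pos (l1 * t)] :
    (-1 : ℝ) ≤ exp (l1 * t) - 1) hl
  rwa [add_sub_cancel, ← exp_mul, show l1 * t * (l2 / l1) = l2 * t by field_simp] at h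

theorem rpow_mul_rpow_of_add_eq_one {s x y a b : ℝ} (hs : 0 ≤ s) (hx : 0 ≤ x) (hy : 0 ≤ y)
    (hab : a + b = 1) : (s * x) ^ a * (s * y) ^ b = s * (x ^ a * y ^ b) := by
  rw [mul_rpow hs hx, mul_rpow hs hy, mul_mul_mul_comm, ← rpow_add' hs (by simp [hab]), hab,
    rpow_one]

theorem mul_exp_mul_log_div_sub {p q l1 l2 : ℝ} (hp : 0 < p) (hq : 0 < q) (hl : l1 - l2 ≠ 0) :
    p * exp (l1 * (log (q / p) / (l1 - l2))) = p ^ (-l2 / (l1 - l2)) * q ^ (l1 / (l1 - l2)) := by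
  rw [rpow_def_of_pos hp, rpow_def_of_pos hq, ← exp_add, log_div hq.ne' hp.ne',
    show log p * (-l2 / (l1 - l2)) + log q * (l1 / (l1 - l2)) =
      log p + l1 * ((log q - log p) / (l1 - l2)) by field_simp; ring, exp_add, exp_log hp]

theorem mul_exp_mul_log_div_sub' {p q l1 l2 : ℝ} (hp : 0 < p) (hq : 0 < q) (hl : l1 - l2 ≠ 0) :
    q * exp (l2 * (log (q / p) / (l1 - l2))) = p ^ (-l2 / (l1 - l2)) * q ^ (l1 / (l1 - l2)) := by
  rw [rpow_def_of_pos hp, rpow_def_of_pos hq, ← exp_add, log_div hq.ne' hp.ne',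
    show log p * (-l2 / (l1 - l2)) + log q * (l1 / (l1 - l2)) =
      log q + l2 * ((log q - log p) / (l1 - l2)) by field_simp; ring, exp_add, exp_log hq]

section Deformation

variable {C A B l1 l2 : ℝ}

theorem deformation_zero : deformation C A B l1 l2 0 = C + A / l1 + B / l2 := by
  simp [deformation]

theorem deformation_add (t0 t : ℝ) :
    deformation C A B l1 l2 (t0 + t) =
      deformation C (A * exp (l1 * t0)) (B * exp (l2 * t0)) l1 l2 t := by
  simp only [deformation, mul_add, exp_add]
  ring

theorem deformation_zero_add_mul_le (hl : l2 ≤ l1) (hl1 : l1 < 0) (hB : B ≤ 0) (t : ℝ) :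
    deformation C A B l1 l2 0 + (A + B) / l1 * (exp (l1 * t) - 1) ≤
      deformation C A B l1 l2 t := by
  have hbern := one_add_div_mul_exp_sub_one_le_exp hl1.ne ((one_le_div_of_neg hl1).2 hl) t
  have hb : 0 ≤ B / l2 := div_nonneg_of_nonpos hB (by linarith)
  have hcross : B / l2 * (l2 / l1 * (exp (l1 * t) - 1)) = B / l1 * (exp (l1 * t) - 1) := by
    field_simp [(by linarith : l2 ≠ 0)]
  have := mul_le_mul_of_nonneg_left hbern hb
  rw [deformation_zero, deformation, add_div]
  linarith

theorem deformation_zero_le (hl : l2 ≤ l1) (hl1 : l1 < 0) (hB : B ≤ 0) (hAB : 0 ≤ A + B)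
    {t : ℝ} (ht : 0 ≤ t) : deformation C A B l1 l2 0 ≤ deformation C A B l1 l2 t := by
  have hdecay : exp (l1 * t) ≤ 1 := exp_le_one_iff.2 (mul_nonpos_of_nonpos_of_nonneg hl1.le ht)
  have := deformation_zero_add_mul_le (C := C) (A := A) hl hl1 hB t
  nlinarith [div_nonpos_of_nonneg_of_nonpos hAB hl1.le]

theorem deformation_le_of_crit (hl : l2 ≤ l1) (hl1 : l1 < 0) (hB : B ≤ 0) {t0 : ℝ}
    (hcrit : A * exp (l1 * t0) + B * exp (l2 * t0) = 0) (t : ℝ) :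
    deformation C A B l1 l2 t0 ≤ deformation C A B l1 l2 t := by
  have := deformation_zero_add_mul_le (C := C) (A := A * exp (l1 * t0)) hl hl1
    (mul_nonpos_of_nonpos_of_nonneg hB (exp_pos (l2 * t0)).le) (t - t0)
  rwa [hcrit, zero_div, zero_mul, add_zero, ← deformation_add, ← deformation_add, add_zero,
    add_sub_cancel] at this

theorem min_zero_le_mul {c z : ℝ} (hz0 : 0 ≤ z) (hz1 : z ≤ 1) : min 0 c ≤ c * z := by
  rcases le_total 0 c with hc | hc
  · exact min_le_of_left_le (mul_nonneg hc hz0)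
  · exact min_le_of_right_le (by nlinarith)

theorem min_le_deformation (hl : l2 ≤ l1) (hl1 : l1 < 0) (hAB : A ≤ 0 ∨ 0 ≤ B) {t : ℝ}
    (ht : 0 ≤ t) : min C (deformation C A B l1 l2 0) ≤ deformation C A B l1 l2 t := by
  have hl2 : l2 < 0 := hl.trans_lt hl1
  have hx : exp (l1 * t) ≤ 1 := exp_le_one_iff.2 (mul_nonpos_of_nonpos_of_nonneg hl1.le ht)
  have hyx : exp (l2 * t) ≤ exp (l1 * t) := exp_le_exp.2 (mul_le_mul_of_nonneg_right hl ht)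
  have hy := exp_pos (l2 * t)
  calc min C (deformation C A B l1 l2 0) = C + min 0 (A / l1 + B / l2) := by
        rw [← min_add_add_left, add_zero, deformation_zero, add_assoc]
    _ ≤ C + (A / l1 * exp (l1 * t) + B / l2 * exp (l2 * t)) := by
        gcongr
        rcases hAB with hA | hB
        · have ha : 0 ≤ A / l1 := div_nonneg_of_nonpos hA hl1.le
          have := min_zero_le_mul (c := A / l1 + B / l2) hy.le (hyx.trans hx)
          nlinarith
        · have hb : B / l2 ≤ 0 := div_nonpos_of_nonneg_of_nonpos hB hl2.le
          have := min_zero_le_mul (c := A / l1 + B / l2) (hy.le.trans hyx) hx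
          nlinarith
    _ = deformation C A B l1 l2 t := by rw [deformation, add_assoc]

theorem exists_deformation_min (hl : l2 < l1) (hl1 : l1 < 0) (hA : 0 < A) (hAB : A + B ≤ 0) :
    ∃ t0, 0 ≤ t0 ∧ (∀ t, deformation C A B l1 l2 t0 ≤ deformation C A B l1 l2 t) ∧
      (deformation C A B l1 l2 t0 ≤ 0 ↔
        C * (l1 * l2) ≤ (l1 - l2) * (A ^ (-l2 / (l1 - l2)) * (-B) ^ (l1 / (l1 - l2)))) := by
  have hd : 0 < l1 - l2 := sub_pos.2 hl
  have hl2 : l2 < 0 := hl.trans hl1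
  have hB : 0 < -B := by linarith
  set G := A ^ (-l2 / (l1 - l2)) * (-B) ^ (l1 / (l1 - l2))
  set t0 := log (-B / A) / (l1 - l2)
  have hA0 : A * exp (l1 * t0) = G := mul_exp_mul_log_div_sub hA hB hd.ne'
  have hB0 : -B * exp (l2 * t0) = G := mul_exp_mul_log_div_sub' hA hB hd.ne'
  refine ⟨t0, div_nonneg (log_nonneg ((one_le_div hA).2 (by linarith))) hd.le,
    deformation_le_of_crit hl.le hl1 (neg_pos.1 hB).le (by linarith), ?_⟩
  have hvalue : deformation C A B l1 l2 t0 * (l1 * l2) = C * (l1 * l2) - (l1 - l2) * G := by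
    rw [deformation]
    generalize exp (l1 * t0) = e1 at hA0 ⊢
    generalize exp (l2 * t0) = e2 at hB0 ⊢
    field_simp [hl1.ne, hl2.ne]
    linear_combination l2 * hA0 - l1 * hB0
  rw [← mul_le_mul_iff_of_pos_right (mul_pos_of_neg_of_neg hl1 hl2), zero_mul, hvalue, sub_nonpos]

theorem exists_pos_le_deformation (hl : l2 < l1) (hl1 : l1 < 0) (hC : 0 < C)
    (h0 : 0 < deformation C A B l1 l2 0)
    (hthr : ¬(A + B < 0 ∧ 0 < A ∧
      C * (l1 * l2) ≤ (l1 - l2) * (A ^ (-l2 / (l1 - l2)) * (-B) ^ (l1 / (l1 - l2))))) :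
    ∃ ε > 0, ∀ t ≥ 0, ε ≤ deformation C A B l1 l2 t := by
  by_cases hsign : A ≤ 0 ∨ 0 ≤ B
  · exact ⟨_, lt_min hC h0, fun t ht => min_le_deformation hl.le hl1 hsign ht⟩
  obtain ⟨hA, hB⟩ := not_or.1 hsign
  rw [not_le] at hA hB
  rcases le_or_gt 0 (A + B) with hAB | hAB
  · exact ⟨_, h0, fun t ht => deformation_zero_le hl.le hl1 hB.le hAB ht⟩
  obtain ⟨t0, -, hmin, hval⟩ := exists_deformation_min (C := C) hl hl1 hA hAB.le
  refine ⟨_, ?_, fun t _ => hmin t⟩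
  by_contra hpos
  exact hthr ⟨hAB, hA, hval.1 (not_lt.1 hpos)⟩

theorem sInf_deformation_le_zero_iff (hl : l2 < l1) (hl1 : l1 < 0) (hC : 0 < C)
    (h0 : 0 < deformation C A B l1 l2 0) :
    sInf (deformation C A B l1 l2 '' Set.Ici 0) ≤ 0 ↔
      A + B < 0 ∧ 0 < A ∧
        C * (l1 * l2) ≤ (l1 - l2) * (A ^ (-l2 / (l1 - l2)) * (-B) ^ (l1 / (l1 - l2))) := by
  constructor
  · intro hinf
    by_contra hthr
    obtain ⟨ε, hε, hle⟩ := exists_pos_le_deformation hl hl1 hC h0 hthr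
    have : ε ≤ sInf (deformation C A B l1 l2 '' Set.Ici 0) :=
      le_csInf (Set.image_nonempty.2 Set.nonempty_Ici) (Set.forall_mem_image.2 hle)
    linarith
  · rintro ⟨hAB, hA, hthr⟩
    obtain ⟨t0, ht0, hmin, hval⟩ := exists_deformation_min (C := C) hl hl1 hA hAB.le
    have hbdd : BddBelow (deformation C A B l1 l2 '' Set.Ici 0) :=
      ⟨_, Set.forall_mem_image.2 fun t _ => hmin t⟩
    exact (csInf_le hbdd (Set.mem_image_of_mem _ ht0)).trans (hval.2 hthr)

end Deformation

/-- Sharp critical threshold, Case A (`1 - 4M₀ > 0`). -/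
theorem stmt6 (M0 rho0 u0' lam1 lam2 A B : ℝ) (g : ℝ → ℝ)
    (hM0 : M0 ∈ Set.Ioo (0 : ℝ) (1 / 4)) (hrho0 : 0 < rho0)
    (hlam1 : lam1 = (-1 + Real.sqrt (1 - 4 * M0)) / 2)
    (hlam2 : lam2 = (-1 - Real.sqrt (1 - 4 * M0)) / 2)
    (hA : A = (lam1 * u0' - M0 + 2 * rho0) / Real.sqrt (1 - 4 * M0))
    (hB : B = (M0 - 2 * rho0 - lam2 * u0') / Real.sqrt (1 - 4 * M0))
    (hg : g = fun t => 2 * rho0 / M0 + (A / lam1) * Real.exp (lam1 * t)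
      + (B / lam2) * Real.exp (lam2 * t)) :
    sInf (g '' Set.Ici (0 : ℝ)) ≤ 0 ↔
      (u0' < 0 ∧ M0 - 2 * rho0 < lam1 * u0' ∧
        2 * rho0 ≤ (lam1 * u0' - M0 + 2 * rho0) ^ (-lam2 / Real.sqrt (1 - 4 * M0))
          * (lam2 * u0' - M0 + 2 * rho0) ^ (lam1 / Real.sqrt (1 - 4 * M0))) := by
  obtain ⟨hM0, hM0'⟩ := hM0
  set s := √(1 - 4 * M0)
  have hs : 0 < s := sqrt_pos.2 (by linarith)
  have hs2 : s ^ 2 = 1 - 4 * M0 := sq_sqrt (by linarith)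
  have hprod : lam1 * lam2 = M0 := by rw [hlam1, hlam2]; linear_combination (-1 / 4 : ℝ) * hs2
  have hsub : lam1 - lam2 = s := by rw [hlam1, hlam2]; ring
  have hl1 : lam1 < 0 := by rw [hlam1]; nlinarith
  have hsA : s * A = lam1 * u0' - M0 + 2 * rho0 := by rw [hA]; field_simp
  have hsB : s * -B = lam2 * u0' - M0 + 2 * rho0 := by rw [hB]; field_simp; ring
  have hAB : A + B = u0' :=
    mul_left_cancel₀ hs.ne' (by linear_combination hsA - hsB + u0' * hsub)
  have hApos : 0 < A ↔ M0 - 2 * rho0 < lam1 * u0' := by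
    rw [← mul_pos_iff_of_pos_left hs, hsA]; constructor <;> intro h <;> linarith
  have h0 : deformation (2 * rho0 / M0) A B lam1 lam2 0 = 1 := by
    have hkey : s * (lam2 * A + lam1 * B) = s * (M0 - 2 * rho0) := by
      linear_combination lam2 * hsA - lam1 * hsB + (M0 - 2 * rho0) * hsub
    rw [deformation_zero, ← hprod]
    field_simp [hl1.ne, (by linarith : lam2 ≠ 0)]
    linear_combination (mul_left_cancel₀ hs.ne' hkey) - hprod
  subst hg
  change sInf (deformation (2 * rho0 / M0) A B lam1 lam2 '' _) ≤ 0 ↔ _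
  rw [sInf_deformation_le_zero_iff (by linarith) hl1 (by positivity) (h0 ▸ one_pos), hAB, hsub,
    hprod, div_mul_cancel₀ _ hM0.ne', ← hApos]
  refine and_congr_right fun hu => and_congr_right fun hA => ?_
  rw [← hsA, ← hsB, rpow_mul_rpow_of_add_eq_one hs.le hA.le (by linarith) (by field_simp; linarith)]
end

section
/- Let $\rho_0 > 0$, $u_0' \in \mathbb{R}$, and set $C_3 = u_0'$, $C_4 = -u_0'/2 - 1/4 + 2\rho_0$. Define $g(t) = 8\rho_0 - (2C_3 + 4C_4)e^{-t/2} - 2C_4 t e^{-t/2}$ (so $g(0)=1$ when $M_0 = 1/4$). Then $\inf_{t \geq 0} g(t) \leq 0$ if and only if $u_0' < \min\{0, 4\rho_0 - 1/2\}$ and $\ln\big(8\rho_0/(8\rho_0 - 2u_0' - 1)\big) \leq 2u_0'/(8\rho_0 - 2u_0' - 1)$. -/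
/-!
With `b = 4ρ₀ - u₀' - 1/2` one has `g t = 8ρ₀ - e^{-t/2} (2u₀' + b (t + 2))`. For `b > 0` the
subtracted term is maximal at `t = -2u₀'/b`, with value `2b e^{u₀'/b}` (a rescaling of
`1 + x ≤ eˣ`); this point lies in `[0, ∞)` exactly when `u₀' < 0`, and then `inf g ≤ 0` is
`8ρ₀ ≤ 2b e^{u₀'/b}`, i.e. the logarithmic condition. In every other case the subtracted term
stays below `max (8ρ₀ - 1) 0` on `[0, ∞)`, so `g ≥ min 1 (8ρ₀) > 0` there.
-/

open Real

lemma exp_neg_half_mul_sub_add_two_le (t c : ℝ) :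
    exp (-t / 2) * (t - c + 2) ≤ 2 * exp (-c / 2) := by
  have h := add_one_le_exp ((t - c) / 2)
  calc exp (-t / 2) * (t - c + 2) ≤ exp (-t / 2) * (2 * exp ((t - c) / 2)) := by
        gcongr; linarith
    _ = 2 * exp (-c / 2) := by rw [mul_left_comm, ← exp_add]; ring_nf

section

variable {u b : ℝ}

lemma exp_neg_half_mul_affine_le (hb : 0 < b) (t : ℝ) :
    exp (-t / 2) * (2 * u + b * (t + 2)) ≤ 2 * b * exp (u / b) := by
  have key := mul_le_mul_of_nonneg_left (exp_neg_half_mul_sub_add_two_le t (-2 * u / b)) hb.le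
  have hc : -(-2 * u / b) / 2 = u / b := by ring
  have hlin : 2 * u + b * (t + 2) = b * (t - -2 * u / b + 2) := by field_simp; ring
  rw [hc] at key
  rw [hlin]
  linarith

lemma exp_neg_half_mul_affine_at_crit (hb : b ≠ 0) :
    exp (-(-2 * u / b) / 2) * (2 * u + b * (-2 * u / b + 2)) = 2 * b * exp (u / b) := by
  have hc : -(-2 * u / b) / 2 = u / b := by ring
  rw [hc]; field_simp; ring

lemma exp_neg_half_mul_affine_le_max {t : ℝ} (ht : 0 ≤ t) (h : 0 ≤ u ∨ b ≤ 0) :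
    exp (-t / 2) * (2 * u + b * (t + 2)) ≤ max (2 * u + 2 * b) 0 := by
  have hexp_pos := exp_pos (-t / 2)
  have hexp_le : exp (-t / 2) ≤ 1 := exp_le_one_iff.mpr (by linarith)
  rcases le_or_gt b 0 with hb | hb
  · calc exp (-t / 2) * (2 * u + b * (t + 2)) ≤ exp (-t / 2) * max (2 * u + 2 * b) 0 := by
          gcongr; nlinarith [le_max_left (2 * u + 2 * b) 0]
      _ ≤ max (2 * u + 2 * b) 0 := mul_le_of_le_one_left (le_max_right _ _) hexp_le
  · have hu : 0 ≤ u := h.resolve_right hb.not_ge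
    have hbt := mul_le_mul_of_nonneg_left (exp_neg_half_mul_sub_add_two_le t 0) hb.le
    simp only [neg_zero, zero_div, exp_zero, sub_zero] at hbt
    nlinarith [le_max_left (2 * u + 2 * b) 0]


lemma sInf_sub_exp_neg_half_mul_affine_le_zero_iff {M : ℝ} (hM : 0 < M) (hA : 2 * u + 2 * b < M) :
    sInf ((fun t => M - exp (-t / 2) * (2 * u + b * (t + 2))) '' Set.Ici 0) ≤ 0 ↔
      u < 0 ∧ 0 < b ∧ M ≤ 2 * b * exp (u / b) := by
  set f := fun t => M - exp (-t / 2) * (2 * u + b * (t + 2)) with hf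
  constructor
  · intro hinf
    by_contra hfail
    obtain ⟨δ, hδ, hδf⟩ : ∃ δ > 0, ∀ t ∈ Set.Ici (0 : ℝ), δ ≤ f t := by
      by_cases hub : u < 0 ∧ 0 < b
      · have hlt : 2 * b * exp (u / b) < M := not_le.mp fun hle => hfail ⟨hub.1, hub.2, hle⟩
        exact ⟨M - 2 * b * exp (u / b), by linarith, fun t _ => by
          linarith [exp_neg_half_mul_affine_le (u := u) hub.2 t]⟩
      · have hcase : 0 ≤ u ∨ b ≤ 0 := by
          by_contra! h; exact hub h
        exact ⟨M - max (2 * u + 2 * b) 0, sub_pos.mpr (max_lt hA hM), fun t ht => by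
          linarith [exp_neg_half_mul_affine_le_max (Set.mem_Ici.mp ht) hcase]⟩
    linarith [le_csInf (Set.nonempty_Ici.image f) (Set.forall_mem_image.mpr hδf)]
  · rintro ⟨hu, hb, hle⟩
    have hbdd : BddBelow (f '' Set.Ici 0) := ⟨M - 2 * b * exp (u / b),
      Set.forall_mem_image.mpr fun t _ => by linarith [exp_neg_half_mul_affine_le (u := u) hb t]⟩
    calc sInf (f '' Set.Ici 0) ≤ f (-2 * u / b) :=
          csInf_le hbdd (Set.mem_image_of_mem f (div_nonneg (by linarith) hb.le))
      _ = M - 2 * b * exp (u / b) := by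
        rw [hf]; dsimp only; rw [exp_neg_half_mul_affine_at_crit hb.ne']
      _ ≤ 0 := by linarith

end

/-- Sharp critical threshold, Case B (`M₀ = 1/4`). -/
theorem stmt7 (rho0 u0' C3 C4 : ℝ) (g : ℝ → ℝ)
    (hrho0 : 0 < rho0)
    (hC3 : C3 = u0') (hC4 : C4 = -u0' / 2 - 1 / 4 + 2 * rho0)
    (hg : g = fun t => 8 * rho0 - (2 * C3 + 4 * C4) * Real.exp (-t / 2)
      - 2 * C4 * t * Real.exp (-t / 2)) :
    sInf (g '' Set.Ici (0 : ℝ)) ≤ 0 ↔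
      (u0' < min 0 (4 * rho0 - 1 / 2) ∧
        Real.log (8 * rho0 / (8 * rho0 - 2 * u0' - 1))
          ≤ 2 * u0' / (8 * rho0 - 2 * u0' - 1)) := by
  set b := 4 * rho0 - u0' - 1 / 2 with hb_def
  have hg_eq : g = fun t => 8 * rho0 - exp (-t / 2) * (2 * u0' + b * (t + 2)) := by
    subst hg hC3 hC4; funext t; ring
  have hcond : u0' < min 0 (4 * rho0 - 1 / 2) ↔ u0' < 0 ∧ 0 < b := by
    rw [lt_min_iff, hb_def]
    constructor <;> rintro ⟨hu, h⟩ <;> exact ⟨hu, by linarith⟩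
  have hcrit (hb : 0 < b) : log (8 * rho0 / (8 * rho0 - 2 * u0' - 1))
      ≤ 2 * u0' / (8 * rho0 - 2 * u0' - 1) ↔ 8 * rho0 ≤ 2 * b * exp (u0' / b) := by
    have hD : 8 * rho0 - 2 * u0' - 1 = 2 * b := by ring
    rw [hD, log_le_iff_le_exp (by positivity), div_le_iff₀ (by positivity),
      mul_div_mul_left _ _ two_ne_zero, mul_comm (exp _)]
  rw [hg_eq, sInf_sub_exp_neg_half_mul_affine_le_zero_iff (by positivity) (by linarith), hcond,
    and_assoc]
  exact and_congr_right fun _ => and_congr_right fun hb => (hcrit hb).symm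
end
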